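/- arXiv:1809.08171 — 2 statements merged into one kernel-verified Lean document; each statement's English description precedes it below -/
import Mathlib

section
/- Assume ⟨α^∨,q⟩ ≥ 0 and ⟨β^∨,q⟩ ≥ 0 for all q ∈ Q, that ⟨α^∨,β⟩ ≤ 0 and ⟨β^∨,α⟩ ≤ 0, and that conditions (∗)_α and (∗)_β hold, with F_α and F_β the facets they provide. Let D ∈ Hom_ℤ(Ξ,ℤ) satisfy D ∈ {ρ_{F_α}, α^∨|_Ξ − ρ_{F_α}}, D ∈ {ρ_{F_β}, β^∨|_Ξ − ρ_{F_β}}, and ⟨D,α⟩ = ⟨D,β⟩ = 1. Then D is a primitive inward-pointing facet normal of Q, i.e. D = ρ_F for some facet F of Q. -/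
variable {V : Type*} [AddCommGroup V] [Module ℚ V]

/-- `F` is a facet of the polytope `Q`: a nonempty proper exposed face of
codimension one. -/
def IsFacet (Q F : Set V) : Prop :=
  F.Nonempty ∧ F ≠ Q ∧
    (∃ (f : V →ₗ[ℚ] ℚ) (c : ℚ), (∀ q ∈ Q, c ≤ f q) ∧ F = {q ∈ Q | f q = c}) ∧
    Module.finrank ℚ ↥((affineSpan ℚ F).direction) + 1 =
      Module.finrank ℚ ↥((affineSpan ℚ Q).direction)

/-- `ρ` and `m` form the primitive inward-pointing normal data of the facet `F` of
the polytope `Q`, relative to the lattice `Ξ` and the base point `ω`: `ρ` represents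
an element of `Hom_ℤ(Ξ,ℤ)` (it is integer valued on `Ξ`) which is primitive (it
attains the value `1` on `Ξ`), and the affine functional `q ↦ ρ (q - ω) + m` is
nonnegative on `Q` and vanishes exactly on `F`. -/
def IsNormalData (Ξ : Submodule ℤ V) (Q : Set V) (ω : V) (F : Set V)
    (ρ : V →ₗ[ℚ] ℚ) (m : ℚ) : Prop :=
  (∀ x ∈ Ξ, ∃ n : ℤ, ρ x = (n : ℚ)) ∧ (∃ x ∈ Ξ, ρ x = 1) ∧
    (∀ q ∈ Q, 0 ≤ ρ (q - ω) + m) ∧ (∀ q ∈ Q, (ρ (q - ω) + m = 0 ↔ q ∈ F))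

/-- `α` is a primitive element of the lattice `Ξ`. -/
def IsPrimitiveIn (Ξ : Submodule ℤ V) (α : V) : Prop :=
  α ∈ Ξ ∧ α ≠ 0 ∧ ∀ (n : ℤ) (x : V), x ∈ Ξ → α = n • x → n = 1 ∨ n = -1

/-! If `D` agrees with `ρ_{F_α}` or `ρ_{F_β}` on `Ξ` there is nothing to prove, so let
`D = α^∨ - ρ_{F_α} = β^∨ - ρ_{F_β}` on `Ξ`. As `D (α + β) = 2 > 0`, some facet `G` has a
normal `ρ_G` positive on `α + β`, hence on `α` or on `β`; say on `α`. By `(∗)_α`, `H_G` is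
`H_{F_α}` or `s_α(H_{F_α})`. The first is impossible: `ρ_G` would be a positive multiple of
`ρ_{F_α}`, but `ρ_{F_α}(α + β) = ⟨α^∨, β⟩ ≤ 0`. In the second case `D ∘ s_α = -ρ_{F_α}`, so `D`
vanishes on the direction of `H_G`; thus `ρ_G = ⟨ρ_G, α⟩ D` with `⟨ρ_G, α⟩` a positive integer,
and primitivity of `ρ_G` forces `ρ_G = D`.

A facet normal positive on a given vector `d` of `Ξ_ℚ` is found by tilting a supporting
hyperplane of `Q` that is positive on `d` about its face until the face is a facet. -/

open Module Submodule

section LinearAlgebra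

variable {k E : Type*} [Field k] [AddCommGroup E] [Module k E]

lemma vectorSpan_le_ker {S : Set E} {g : E →ₗ[k] k} {c : k} (h : ∀ x ∈ S, g x = c) :
    vectorSpan k S ≤ LinearMap.ker g := by
  rw [vectorSpan_def, span_le]
  rintro _ ⟨x, hx, y, hy, rfl⟩
  simp [h x hx, h y hy]

lemma vectorSpan_lt_of_forall_apply_eq {S T : Set E} (hST : S ⊆ T) {g : E →ₗ[k] k} {c : k}
    (h : ∀ x ∈ S, g x = c) {d : E} (hd : d ∈ vectorSpan k T) (hgd : g d ≠ 0) :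
    vectorSpan k S < vectorSpan k T :=
  SetLike.lt_iff_le_and_exists.2
    ⟨vectorSpan_mono k hST, d, hd, fun hdS => hgd (vectorSpan_le_ker h hdS)⟩

lemma exists_vsub_notMem_of_finrank_lt [FiniteDimensional k E] {s : Set E} {v : E} (hv : v ∈ s)
    {U : Submodule k E} (hU : finrank k U < finrank k (vectorSpan k s)) :
    ∃ x ∈ s, x -ᵥ v ∉ U := by
  by_contra! h
  have : vectorSpan k s ≤ U := by
    rw [vectorSpan_eq_span_vsub_set_right k hv, span_le]
    rintro _ ⟨x, hx, rfl⟩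
    exact h x hx
  exact (finrank_mono this).not_gt hU

lemma finrank_vectorSpan_sep_lt [FiniteDimensional k E] {s : Set E} {g : E →ₗ[k] k} (c : k) {d : E}
    (hd : d ∈ vectorSpan k s) (hgd : g d ≠ 0) :
    finrank k (vectorSpan k {x ∈ s | g x = c}) < finrank k (vectorSpan k s) :=
  finrank_lt_finrank_of_lt (vectorSpan_lt_of_forall_apply_eq (Set.sep_subset _ _)
    (fun _ hx => hx.2) hd hgd)

lemma AffineSubspace.direction_eq_map_of_coe_eq_image {E' : Type*} [AddCommGroup E'] [Module k E']
    {P : AffineSubspace k E} {P' : AffineSubspace k E'} (r : E →ₗ[k] E')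
    (h : (P' : Set E') = r '' P) :
    P'.direction = P.direction.map r := by
  rw [AffineSubspace.direction_eq_vectorSpan, AffineSubspace.direction_eq_vectorSpan, h]
  exact (r.toAffineMap.map_vectorSpan).symm

lemma apply_eq_div_mul_of_le_ker [FiniteDimensional k E] {K W : Submodule k E} (hKW : K ≤ W)
    (hrank : finrank k K + 1 = finrank k W) {f g : E →ₗ[k] k}
    (hf : K ≤ LinearMap.ker f) (hg : K ≤ LinearMap.ker g) {a : E} (ha : a ∈ W) (hga : g a ≠ 0)
    {w : E} (hw : w ∈ W) : f w = f a / g a * g w := by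
  have haK : a ∉ K := fun h => hga (hg h)
  have hKa : K < K ⊔ span k {a} :=
    SetLike.lt_iff_le_and_exists.2 ⟨le_sup_left, a, mem_sup_right (mem_span_singleton_self a), haK⟩
  have hsup : K ⊔ span k {a} = W :=
    eq_of_le_of_finrank_le (sup_le hKW ((span_singleton_le_iff_mem a W).2 ha))
      (by have := finrank_lt_finrank_of_lt hKa; omega)
  obtain ⟨u, hu, _, hx, rfl⟩ := mem_sup.1 (hsup ▸ hw)
  obtain ⟨t, rfl⟩ := mem_span_singleton.1 hx
  simp only [map_add, map_smul, LinearMap.mem_ker.1 (hf hu), LinearMap.mem_ker.1 (hg hu),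
    smul_eq_mul, zero_add]
  field_simp

end LinearAlgebra

section Convex

variable {k E : Type*} [Field k] [LinearOrder k] [IsStrictOrderedRing k]
  [AddCommGroup E] [Module k E]

lemma le_apply_of_mem_convexHull {s : Set E} {g : E →ₗ[k] k} {c : k}
    (h : ∀ x ∈ s, c ≤ g x) {q : E} (hq : q ∈ convexHull k s) : c ≤ g q :=
  convexHull_min h (convex_halfSpace_ge g.isLinear c) hq

lemma exists_le_ker_apply_lt {U : Submodule k E} {x v : E} (h : x - v ∉ U) :
    ∃ f : E →ₗ[k] k, U ≤ LinearMap.ker f ∧ f x < f v := by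
  obtain ⟨f, hf, hfU⟩ := U.exists_dual_map_eq_bot_of_notMem h inferInstance
  have hUf : U ≤ LinearMap.ker f := fun u hu => by
    simpa [hfU] using mem_map_of_mem (f := f) hu
  rw [map_sub] at hf
  rcases (sub_ne_zero.1 hf).lt_or_gt with hlt | hgt
  · exact ⟨f, hUf, hlt⟩
  · exact ⟨-f, fun u hu => by simpa using hUf hu, by simpa using hgt⟩

lemma exists_pos_tilt {ι : Type*} (s : Finset ι) (g h : ι → k) (c b : k)
    (hc : ∀ x ∈ s, c ≤ g x) (hlt : ∀ x ∈ s, h x < b → c < g x)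
    {x₁ : ι} (hx₁ : x₁ ∈ s) (hx₁b : h x₁ < b) :
    ∃ t : k, 0 < t ∧ (∀ x ∈ s, c + t * b ≤ g x + t * h x) ∧
      ∃ x ∈ s, h x < b ∧ g x + t * h x = c + t * b := by
  classical
  obtain ⟨y, hy, hymin⟩ := (s.filter (h · < b)).exists_min_image
    (fun x => (g x - c) / (b - h x)) ⟨x₁, Finset.mem_filter.2 ⟨hx₁, hx₁b⟩⟩
  rw [Finset.mem_filter] at hy
  have hyb : 0 < b - h y := sub_pos.2 hy.2
  have ht : 0 < (g y - c) / (b - h y) := div_pos (sub_pos.2 (hlt y hy.1 hy.2)) hyb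
  refine ⟨_, ht, fun x hx => ?_, y, hy.1, hy.2, ?_⟩
  · rcases le_or_gt b (h x) with hbx | hxb
    · nlinarith [hc x hx, mul_le_mul_of_nonneg_left hbx ht.le]
    · have := hymin x (Finset.mem_filter.2 ⟨hx, hxb⟩)
      rw [le_div_iff₀ (sub_pos.2 hxb)] at this
      linarith
  · field_simp
    ring

end Convex

section Rotation

variable {k E : Type*} [Field k] [LinearOrder k] [IsStrictOrderedRing k]
  [AddCommGroup E] [Module k E] [FiniteDimensional k E]

/-- Tilt `g` about its face, along a functional vanishing on the face and on `d`. -/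
lemma exists_isLeast_finrank_lt {s : Finset E} {g : E →ₗ[k] k} {c : k} {d : E}
    (hmin : IsLeast (g '' s) c) (hgd : 0 < g d)
    (hlt : finrank k (vectorSpan k {x ∈ (s : Set E) | g x = c}) + 1 <
      finrank k (vectorSpan k (s : Set E))) :
    ∃ (g' : E →ₗ[k] k) (c' : k), IsLeast (g' '' s) c' ∧ 0 < g' d ∧
      finrank k (vectorSpan k {x ∈ (s : Set E) | g x = c}) <
        finrank k (vectorSpan k {x ∈ (s : Set E) | g' x = c'}) := by
  obtain ⟨⟨v, hvs, hgv⟩, hlow⟩ := hmin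
  set K := vectorSpan k {x ∈ (s : Set E) | g x = c}
  have hU : finrank k ↥(K ⊔ span k {d}) < finrank k (vectorSpan k (s : Set E)) := by
    have := finrank_add_le_finrank_add_finrank K (span k {d})
    have : finrank k (span k {d}) = 1 := finrank_span_singleton (by rintro rfl; simp at hgd)
    omega
  obtain ⟨x₀, hx₀, hx₀U⟩ := exists_vsub_notMem_of_finrank_lt hvs hU
  obtain ⟨h, hUh, hhx₀⟩ := exists_le_ker_apply_lt hx₀U
  have hKh : K ≤ LinearMap.ker h := le_sup_left.trans hUh
  have hface : ∀ x ∈ (s : Set E), g x = c → h x = h v := fun x hx hgx => by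
    have := hKh (vsub_mem_vectorSpan k (show x ∈ {x ∈ (s : Set E) | g x = c} from ⟨hx, hgx⟩)
      ⟨hvs, hgv⟩)
    rwa [LinearMap.mem_ker, vsub_eq_sub, map_sub, sub_eq_zero] at this
  obtain ⟨t, ht, hle, xₘ, hxₘ, hhxₘ, hgxₘ⟩ := exists_pos_tilt s g h c (h v)
    (fun x hx => hlow ⟨x, hx, rfl⟩)
    (fun x hx hhx => (hlow ⟨x, hx, rfl⟩).lt_of_ne fun hgx => hhx.ne (hface x hx hgx.symm))
    hx₀ hhx₀
  refine ⟨g + t • h, c + t * h v, ⟨⟨v, hvs, by simp [hgv]⟩, ?_⟩, ?_, ?_⟩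
  · rintro _ ⟨x, hx, rfl⟩
    simpa using hle x hx
  · simpa [LinearMap.mem_ker.1 (hUh (mem_sup_right (mem_span_singleton_self d)))] using hgd
  · apply finrank_lt_finrank_of_lt
    refine SetLike.lt_iff_le_and_exists.2 ⟨vectorSpan_mono k fun x hx => ⟨hx.1, ?_⟩, xₘ -ᵥ v,
      vsub_mem_vectorSpan k (s := {x ∈ (s : Set E) | (g + t • h) x = c + t * h v})
        ⟨hxₘ, by simpa using hgxₘ⟩ ⟨hvs, by simp [hgv]⟩, fun hK => ?_⟩
    · simp [hx.2, hface x hx.1 hx.2]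
    · have := hKh hK
      rw [LinearMap.mem_ker, vsub_eq_sub, map_sub, sub_eq_zero] at this
      exact hhxₘ.ne this

lemma exists_isLeast_finrank_add_one_eq {s : Finset E} {d : E} (hd : d ∈ vectorSpan k (s : Set E))
    {g₀ : E →ₗ[k] k} (hg₀ : 0 < g₀ d) :
    ∃ (g : E →ₗ[k] k) (c : k), IsLeast (g '' s) c ∧ 0 < g d ∧
      finrank k (vectorSpan k {x ∈ (s : Set E) | g x = c}) + 1 =
        finrank k (vectorSpan k (s : Set E)) := by
  set n := finrank k (vectorSpan k (s : Set E))
  suffices ∀ m, ∀ (g : E →ₗ[k] k) (c : k), IsLeast (g '' s) c → 0 < g d →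
      n - finrank k (vectorSpan k {x ∈ (s : Set E) | g x = c}) = m →
      ∃ (g : E →ₗ[k] k) (c : k), IsLeast (g '' s) c ∧ 0 < g d ∧
        finrank k (vectorSpan k {x ∈ (s : Set E) | g x = c}) + 1 = n by
    have hs : s.Nonempty := by
      rw [Finset.nonempty_iff_ne_empty]
      rintro rfl
      simp only [Finset.coe_empty, vectorSpan_empty, mem_bot] at hd
      simp [hd] at hg₀
    obtain ⟨v, hv, hvmin⟩ := s.exists_min_image g₀ hs
    exact this _ g₀ (g₀ v) ⟨⟨v, hv, rfl⟩, by rintro _ ⟨x, hx, rfl⟩; exact hvmin x hx⟩ hg₀ rfl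
  intro m
  induction m using Nat.strong_induction_on with
  | _ m ih =>
    intro g c hmin hgd hm
    have hle := finrank_vectorSpan_sep_lt c hd hgd.ne'
    by_cases hlt : finrank k (vectorSpan k {x ∈ (s : Set E) | g x = c}) + 1 < n
    · obtain ⟨g', c', hmin', hg'd, hrank⟩ := exists_isLeast_finrank_lt hmin hgd hlt
      have := finrank_vectorSpan_sep_lt c' hd hg'd.ne'
      exact ih _ (by omega) g' c' hmin' hg'd rfl
    · exact ⟨g, c, hmin, hgd, by omega⟩

end Rotation

lemma Submodule.exists_pos_eq_span_singleton_of_fg {A : Submodule ℤ ℚ} (hA : A.FG) (hA0 : A ≠ ⊥) :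
    ∃ b : ℚ, 0 < b ∧ A = span ℤ {b} := by
  obtain ⟨b, hb⟩ :=
    (FractionalIdeal.isPrincipal ⟨A, FractionalIdeal.isFractional_of_fg hA⟩).principal
  change A = span ℤ {b} at hb
  rcases lt_trichotomy b 0 with hneg | rfl | hpos
  · exact ⟨-b, neg_pos.2 hneg, by rw [hb, ← Set.neg_singleton, span_neg]⟩
  · exact absurd (hb.trans (span_zero_singleton ℤ)) hA0
  · exact ⟨b, hpos, hb⟩

section Polytope

/-- `a⁻¹` is the positive generator of `g(Ξ)`. -/
lemma exists_pos_isNormalData_smul {Ξ : Submodule ℤ V} (hΞ : Ξ.FG) {Q : Set V} (ω : V)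
    {g : V →ₗ[ℚ] ℚ} {c : ℚ} (hQ : ∀ q ∈ Q, c ≤ g q) {x : V} (hx : x ∈ Ξ) (hgx : g x ≠ 0) :
    ∃ a : ℚ, 0 < a ∧ IsNormalData Ξ Q ω {q ∈ Q | g q = c} (a • g) (a * (g ω - c)) := by
  have hA0 : Ξ.map (g.restrictScalars ℤ) ≠ ⊥ := fun h =>
    hgx ((mem_bot ℤ).1 (h ▸ mem_map_of_mem (f := g.restrictScalars ℤ) hx))
  obtain ⟨b, hb, hA⟩ :=
    Submodule.exists_pos_eq_span_singleton_of_fg (hΞ.map (g.restrictScalars ℤ)) hA0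
  have hval : ∀ q, (b⁻¹ • g) (q - ω) + b⁻¹ * (g ω - c) = b⁻¹ * (g q - c) := fun q => by
    simp only [LinearMap.smul_apply, map_sub, smul_eq_mul]
    ring
  refine ⟨b⁻¹, inv_pos.2 hb, fun y hy => ?_, ?_, fun q hq => ?_, fun q hq => ?_⟩
  · obtain ⟨n, hn⟩ := mem_span_singleton.1 (hA ▸ mem_map_of_mem (f := g.restrictScalars ℤ) hy)
    refine ⟨n, ?_⟩
    simp only [LinearMap.restrictScalars_apply] at hn
    rw [LinearMap.smul_apply, ← hn, zsmul_eq_mul, smul_eq_mul]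
    field_simp
  · obtain ⟨y, hy, hgy⟩ := mem_map.1 (hA ▸ mem_span_singleton_self b : b ∈ Ξ.map _)
    refine ⟨y, hy, ?_⟩
    simp only [LinearMap.restrictScalars_apply] at hgy
    simp [hgy, hb.ne']
  · rw [hval]
    exact mul_nonneg (inv_pos.2 hb).le (sub_nonneg.2 (hQ q hq))
  · rw [hval, mul_eq_zero, sub_eq_zero]
    simp [hb.ne', hq]

variable [FiniteDimensional ℚ V]

lemma isFacet_sep_convexHull {s : Finset V} {g : V →ₗ[ℚ] ℚ} {c : ℚ} {d : V}
    (hmin : IsLeast (g '' s) c) (hd : d ∈ vectorSpan ℚ (s : Set V)) (hgd : g d ≠ 0)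
    (hrank : finrank ℚ (vectorSpan ℚ {x ∈ (s : Set V) | g x = c}) + 1 =
      finrank ℚ (vectorSpan ℚ (s : Set V))) :
    IsFacet (convexHull ℚ (s : Set V)) {q ∈ convexHull ℚ (s : Set V) | g q = c} := by
  obtain ⟨⟨v, hvs, hgv⟩, hlow⟩ := hmin
  have hQ : (affineSpan ℚ (convexHull ℚ (s : Set V))).direction = vectorSpan ℚ (s : Set V) := by
    rw [affineSpan_convexHull, direction_affineSpan]
  have hlt : finrank ℚ (affineSpan ℚ {q ∈ convexHull ℚ (s : Set V) | g q = c}).direction <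
      finrank ℚ (vectorSpan ℚ (s : Set V)) := by
    rw [direction_affineSpan, ← hQ, direction_affineSpan]
    exact finrank_vectorSpan_sep_lt c (by rwa [← direction_affineSpan, hQ]) hgd
  have hle : finrank ℚ (vectorSpan ℚ {x ∈ (s : Set V) | g x = c}) ≤
      finrank ℚ (affineSpan ℚ {q ∈ convexHull ℚ (s : Set V) | g q = c}).direction := by
    rw [direction_affineSpan]
    exact finrank_mono (vectorSpan_mono ℚ fun x hx => ⟨subset_convexHull ℚ _ hx.1, hx.2⟩)
  refine ⟨⟨v, subset_convexHull ℚ _ hvs, hgv⟩, fun hFQ => ?_,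
    ⟨g, c, fun q => le_apply_of_mem_convexHull fun x hx => hlow ⟨x, hx, rfl⟩, rfl⟩, ?_⟩
  · rw [hFQ, hQ] at hlt
    exact hlt.false
  · rw [hQ]
    omega

theorem exists_isFacet_isNormalData_pos {Ξ : Submodule ℤ V} (hΞ : Ξ.FG) {s : Finset V}
    (hs : vectorSpan ℚ (s : Set V) = span ℚ (Ξ : Set V)) (ω : V) {d : V} (hd : d ∈ Ξ)
    {g₀ : V →ₗ[ℚ] ℚ} (hg₀ : 0 < g₀ d) :
    ∃ F ρ m, IsFacet (convexHull ℚ (s : Set V)) F ∧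
      IsNormalData Ξ (convexHull ℚ (s : Set V)) ω F ρ m ∧ 0 < ρ d := by
  have hds : d ∈ vectorSpan ℚ (s : Set V) := hs ▸ subset_span hd
  obtain ⟨g, c, hmin, hgd, hrank⟩ := exists_isLeast_finrank_add_one_eq hds hg₀
  obtain ⟨a, ha, hN⟩ := exists_pos_isNormalData_smul hΞ ω
    (fun q => le_apply_of_mem_convexHull fun x hx => hmin.2 ⟨x, hx, rfl⟩) hd hgd.ne'
  exact ⟨_, _, _, isFacet_sep_convexHull hmin hds hgd.ne' hrank, hN, by simpa using mul_pos ha hgd⟩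

end Polytope

section NormalData

variable {Ξ : Submodule ℤ V} {Q F : Set V} {ω : V} {ρ : V →ₗ[ℚ] ℚ} {m : ℚ}

lemma IsFacet.subset (h : IsFacet Q F) : F ⊆ Q := by
  obtain ⟨-, -, ⟨-, -, -, rfl⟩, -⟩ := h
  exact Set.sep_subset _ _

lemma IsFacet.direction_le (h : IsFacet Q F) : (affineSpan ℚ F).direction ≤ vectorSpan ℚ Q := by
  simpa [direction_affineSpan] using AffineSubspace.direction_le (affineSpan_mono ℚ h.subset)

lemma IsNormalData.direction_le_ker (h : IsNormalData Ξ Q ω F ρ m) (hFQ : F ⊆ Q) :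
    (affineSpan ℚ F).direction ≤ LinearMap.ker ρ := by
  rw [direction_affineSpan]
  refine vectorSpan_le_ker (c := ρ ω - m) fun x hx => ?_
  have := (h.2.2.2 x (hFQ hx)).2 hx
  rw [map_sub] at this
  linarith

lemma IsNormalData.of_eqOn (h : IsNormalData Ξ Q ω F ρ m)
    (hQ : ∀ q ∈ Q, q - ω ∈ span ℚ (Ξ : Set V)) {D : V →ₗ[ℚ] ℚ} (hD : ∀ x ∈ Ξ, D x = ρ x) :
    IsNormalData Ξ Q ω F D m := by
  have hDQ : ∀ q ∈ Q, D (q - ω) = ρ (q - ω) := fun q hq => LinearMap.eqOn_span' hD (hQ q hq)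
  obtain ⟨hint, ⟨x, hx, hx1⟩, hnonneg, hzero⟩ := h
  refine ⟨fun y hy => hD y hy ▸ hint y hy, ⟨x, hx, (hD x hx).trans hx1⟩, fun q hq => ?_,
    fun q hq => ?_⟩
  · rw [hDQ q hq]
    exact hnonneg q hq
  · rw [hDQ q hq]
    exact hzero q hq

lemma IsNormalData.eqOn_of_eq_intCast_mul (h : IsNormalData Ξ Q ω F ρ m) {D : V →ₗ[ℚ] ℚ}
    (hD : ∀ x ∈ Ξ, ∃ n : ℤ, D x = n) {n : ℤ} (hn : 0 < n) (hρD : ∀ x ∈ Ξ, ρ x = n * D x) :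
    ∀ x ∈ Ξ, ρ x = D x := by
  obtain ⟨x, hx, hx1⟩ := h.2.1
  obtain ⟨j, hj⟩ := hD x hx
  have hn1 : n = 1 := Int.eq_one_of_mul_eq_one_right hn.le (by
    rw [hρD x hx, hj] at hx1
    exact_mod_cast hx1)
  intro y hy
  rw [hρD y hy, hn1, Int.cast_one, one_mul]

lemma IsNormalData.apply_eq_div_mul [FiniteDimensional ℚ V] (hF : IsFacet Q F)
    (h : IsNormalData Ξ Q ω F ρ m) (hQ : vectorSpan ℚ Q = span ℚ (Ξ : Set V))
    {φ : V →ₗ[ℚ] ℚ} (hφ : (affineSpan ℚ F).direction ≤ LinearMap.ker φ) {a : V} (ha : a ∈ Ξ)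
    (hφa : φ a ≠ 0) {w : V} (hw : w ∈ span ℚ (Ξ : Set V)) : ρ w = ρ a / φ a * φ w := by
  refine apply_eq_div_mul_of_le_ker (hQ ▸ hF.direction_le) ?_ (h.direction_le_ker hF.subset) hφ
    (subset_span ha) hφa hw
  rw [← hQ, ← direction_affineSpan]
  exact hF.2.2.2

end NormalData

/-- Condition `(∗)_α` for the facet `Fα`, with `αv` playing the role of `α^∨`. -/
def StarCondition (Ξ : Submodule ℤ V) (Q : Set V) (ω α : V) (αv : V →ₗ[ℚ] ℚ) (Fα : Set V) :
    Prop :=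
  ∀ (F' : Set V) (ρ' : V →ₗ[ℚ] ℚ) (m' : ℚ),
    IsFacet Q F' → IsNormalData Ξ Q ω F' ρ' m' → 0 < ρ' α →
      (affineSpan ℚ F' : Set V) = (affineSpan ℚ Fα : Set V) ∨
      (affineSpan ℚ F' : Set V) = (fun x => x - αv x • α) '' (affineSpan ℚ Fα : Set V)

theorem StarCondition.eqOn_of_apply_pos [FiniteDimensional ℚ V] {Ξ : Submodule ℤ V} {Q : Set V}
    {ω α β : V} {αv : V →ₗ[ℚ] ℚ} {Fα : Set V} (hstar : StarCondition Ξ Q ω α αv Fα)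
    (hQ : vectorSpan ℚ Q = span ℚ (Ξ : Set V)) (hα : α ∈ Ξ) (hβ : β ∈ Ξ) (hαvα : αv α = 2)
    (hαvβ : αv β ≤ 0) {ρα : V →ₗ[ℚ] ℚ} {mα : ℚ} (hFα : IsFacet Q Fα)
    (hρα : IsNormalData Ξ Q ω Fα ρα mα) (hραα : ρα α = 1) {D : V →ₗ[ℚ] ℚ}
    (hDint : ∀ x ∈ Ξ, ∃ n : ℤ, D x = n) (hD : ∀ x ∈ Ξ, D x = αv x - ρα x) (hDα : D α = 1)
    (hDβ : D β = 1) {G : Set V} {ρG : V →ₗ[ℚ] ℚ} {mG : ℚ} (hG : IsFacet Q G)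
    (hρG : IsNormalData Ξ Q ω G ρG mG) (hρGα : 0 < ρG α) (hρGαβ : 0 < ρG (α + β)) :
    ∀ x ∈ Ξ, D x = ρG x := by
  rcases hstar G ρG mG hG hρG hρGα with hspan | hspan
  · -- `ρG` would be a positive multiple of `ρα`, which is `≤ 0` at `α + β`
    have hdir : (affineSpan ℚ G).direction = (affineSpan ℚ Fα).direction := by
      rw [AffineSubspace.coe_injective hspan]
    have := hρG.apply_eq_div_mul hG hQ (hdir ▸ hρα.direction_le_ker hFα.subset) hα
      (by simp [hραα]) (subset_span (add_mem hα hβ))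
    have hραβ : ρα β = αv β - 1 := by linarith [hD β hβ]
    rw [hραα, div_one, map_add ρα, hραα, hραβ] at this
    nlinarith
  · have hDW : ∀ w ∈ span ℚ (Ξ : Set V), D w = αv w - ρα w := fun w hw => by
      simpa using
        LinearMap.eqOn_span' (f := D) (g := αv - ρα) (fun x hx => by simpa using hD x hx) hw
    have hdir : (affineSpan ℚ G).direction =
        (affineSpan ℚ Fα).direction.map (Module.reflection hαvα).toLinearMap := by
      refine AffineSubspace.direction_eq_map_of_coe_eq_image _ (hspan.trans ?_)
      simp [Module.reflection_apply]
    -- `D ∘ s_α = -ρα` on `span Ξ`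
    have hker : (affineSpan ℚ G).direction ≤ LinearMap.ker D := by
      rw [hdir, map_le_iff_le_comap]
      intro u hu
      have hu0 := LinearMap.mem_ker.1 (hρα.direction_le_ker hFα.subset hu)
      simp [Module.reflection_apply, hDW u (hQ ▸ hFα.direction_le hu), hDα, hu0]
    obtain ⟨n, hn⟩ := hρG.1 α hα
    have hρGD : ∀ x ∈ Ξ, ρG x = n * D x := fun x hx => by
      rw [hρG.apply_eq_div_mul hG hQ hker hα (by simp [hDα]) (subset_span hx), hDα, div_one, hn]
    exact fun x hx =>
      (hρG.eqOn_of_eq_intCast_mul hDint (by exact_mod_cast hn ▸ hρGα) hρGD x hx).symm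

theorem statement2_general [FiniteDimensional ℚ V]
    (Λ Ξ : Submodule ℤ V) (hΞΛ : Ξ ≤ Λ) (hΛfg : Λ.FG)
    (Q : Set V) (hQpoly : ∃ s : Finset V, Q = convexHull ℚ (s : Set V))
    (ω : V) (hω : ω ∈ Q)
    (hQΞ : ∀ q ∈ Q, q - ω ∈ Submodule.span ℚ (Ξ : Set V))
    (hQfull : Submodule.span ℚ {x : V | ∃ q ∈ Q, x = q - ω} =
      Submodule.span ℚ (Ξ : Set V))
    (α β : V) (hα : IsPrimitiveIn Ξ α) (hβ : IsPrimitiveIn Ξ β)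
    (αv βv : V →ₗ[ℚ] ℚ)
    (hαvα : αv α = 2)
    (hβvβ : βv β = 2)
    (hαvβ : αv β ≤ 0) (hβvα : βv α ≤ 0)
    -- condition (∗)_α, with the facet `Fα` it provides
    (Fα : Set V) (ρα : V →ₗ[ℚ] ℚ) (mα : ℚ)
    (hFα : IsFacet Q Fα) (hρα : IsNormalData Ξ Q ω Fα ρα mα) (hραα : ρα α = 1)
    (hstarα : ∀ (F' : Set V) (ρ' : V →ₗ[ℚ] ℚ) (m' : ℚ),
      IsFacet Q F' → IsNormalData Ξ Q ω F' ρ' m' → 0 < ρ' α →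
        (affineSpan ℚ F' : Set V) = (affineSpan ℚ Fα : Set V) ∨
        (affineSpan ℚ F' : Set V) =
          (fun x => x - αv x • α) '' (affineSpan ℚ Fα : Set V))
    -- condition (∗)_β, with the facet `Fβ` it provides
    (Fβ : Set V) (ρβ : V →ₗ[ℚ] ℚ) (mβ : ℚ)
    (hFβ : IsFacet Q Fβ) (hρβ : IsNormalData Ξ Q ω Fβ ρβ mβ) (hρββ : ρβ β = 1)
    (hstarβ : ∀ (F' : Set V) (ρ' : V →ₗ[ℚ] ℚ) (m' : ℚ),
      IsFacet Q F' → IsNormalData Ξ Q ω F' ρ' m' → 0 < ρ' β →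
        (affineSpan ℚ F' : Set V) = (affineSpan ℚ Fβ : Set V) ∨
        (affineSpan ℚ F' : Set V) =
          (fun x => x - βv x • β) '' (affineSpan ℚ Fβ : Set V))
    -- the functional `D ∈ Hom_ℤ(Ξ,ℤ)`
    (D : V →ₗ[ℚ] ℚ) (hDint : ∀ x ∈ Ξ, ∃ n : ℤ, D x = (n : ℚ))
    (hDα : (∀ x ∈ Ξ, D x = ρα x) ∨ (∀ x ∈ Ξ, D x = αv x - ρα x))
    (hDβ : (∀ x ∈ Ξ, D x = ρβ x) ∨ (∀ x ∈ Ξ, D x = βv x - ρβ x))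
    (hDa : D α = 1) (hDb : D β = 1) :
    ∃ (F : Set V) (m : ℚ), IsFacet Q F ∧ IsNormalData Ξ Q ω F D m := by
  rcases hDα with hDα | hDα
  · exact ⟨Fα, mα, hFα, hρα.of_eqOn hQΞ hDα⟩
  rcases hDβ with hDβ | hDβ
  · exact ⟨Fβ, mβ, hFβ, hρβ.of_eqOn hQΞ hDβ⟩
  have hQ : vectorSpan ℚ Q = span ℚ (Ξ : Set V) := by
    rw [vectorSpan_eq_span_vsub_set_right ℚ hω, ← hQfull]
    congr 1
    ext x
    simp [eq_comm]
  obtain ⟨s, rfl⟩ := hQpoly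
  have hs : vectorSpan ℚ (s : Set V) = span ℚ (Ξ : Set V) := by
    rw [← hQ, ← direction_affineSpan, ← direction_affineSpan, affineSpan_convexHull]
  obtain ⟨G, ρG, mG, hG, hρG, hρGαβ⟩ := exists_isFacet_isNormalData_pos (hΛfg.of_le hΞΛ) hs ω
    (add_mem hα.1 hβ.1) (g₀ := D) (by simp [hDa, hDb])
  refine ⟨G, mG, hG, hρG.of_eqOn hQΞ fun x hx => ?_⟩
  rcases lt_or_ge 0 (ρG α) with hρGα | hρGα
  · exact StarCondition.eqOn_of_apply_pos hstarα hQ hα.1 hβ.1 hαvα hαvβ hFα hρα hραα hDint hDα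
      hDa hDb hG hρG hρGα hρGαβ x hx
  · have hρGβ : 0 < ρG β := by linarith [map_add ρG α β]
    exact StarCondition.eqOn_of_apply_pos hstarβ hQ hβ.1 hα.1 hβvβ hβvα hFβ hρβ hρββ hDint hDβ
      hDb hDa hG hρG hρGβ (add_comm α β ▸ hρGαβ) x hx

theorem statement2 [FiniteDimensional ℚ V]
    (Λ Ξ : Submodule ℤ V) (hΞΛ : Ξ ≤ Λ) (hΛfg : Λ.FG)
    (hΛspan : Submodule.span ℚ (Λ : Set V) = ⊤)
    (Q : Set V) (hQpoly : ∃ s : Finset V, Q = convexHull ℚ (s : Set V))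
    (ω : V) (hω : ω ∈ Q)
    (hQΞ : ∀ q ∈ Q, q - ω ∈ Submodule.span ℚ (Ξ : Set V))
    (hQfull : Submodule.span ℚ {x : V | ∃ q ∈ Q, x = q - ω} =
      Submodule.span ℚ (Ξ : Set V))
    (α β : V) (hα : IsPrimitiveIn Ξ α) (hβ : IsPrimitiveIn Ξ β) (hαβ : α ≠ β)
    (αv βv : V →ₗ[ℚ] ℚ)
    (hαvΛ : ∀ x ∈ Λ, ∃ n : ℤ, αv x = (n : ℚ)) (hαvα : αv α = 2)
    (hβvΛ : ∀ x ∈ Λ, ∃ n : ℤ, βv x = (n : ℚ)) (hβvβ : βv β = 2)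
    (hαvβ : αv β ≤ 0) (hβvα : βv α ≤ 0)
    (hQα : ∀ q ∈ Q, 0 ≤ αv q) (hQβ : ∀ q ∈ Q, 0 ≤ βv q)
    -- condition (∗)_α, with the facet `Fα` it provides
    (Fα : Set V) (ρα : V →ₗ[ℚ] ℚ) (mα : ℚ)
    (hFα : IsFacet Q Fα) (hρα : IsNormalData Ξ Q ω Fα ρα mα) (hραα : ρα α = 1)
    (hstarα : ∀ (F' : Set V) (ρ' : V →ₗ[ℚ] ℚ) (m' : ℚ),
      IsFacet Q F' → IsNormalData Ξ Q ω F' ρ' m' → 0 < ρ' α →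
        (affineSpan ℚ F' : Set V) = (affineSpan ℚ Fα : Set V) ∨
        (affineSpan ℚ F' : Set V) =
          (fun x => x - αv x • α) '' (affineSpan ℚ Fα : Set V))
    -- condition (∗)_β, with the facet `Fβ` it provides
    (Fβ : Set V) (ρβ : V →ₗ[ℚ] ℚ) (mβ : ℚ)
    (hFβ : IsFacet Q Fβ) (hρβ : IsNormalData Ξ Q ω Fβ ρβ mβ) (hρββ : ρβ β = 1)
    (hstarβ : ∀ (F' : Set V) (ρ' : V →ₗ[ℚ] ℚ) (m' : ℚ),
      IsFacet Q F' → IsNormalData Ξ Q ω F' ρ' m' → 0 < ρ' β →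
        (affineSpan ℚ F' : Set V) = (affineSpan ℚ Fβ : Set V) ∨
        (affineSpan ℚ F' : Set V) =
          (fun x => x - βv x • β) '' (affineSpan ℚ Fβ : Set V))
    -- the functional `D ∈ Hom_ℤ(Ξ,ℤ)`
    (D : V →ₗ[ℚ] ℚ) (hDint : ∀ x ∈ Ξ, ∃ n : ℤ, D x = (n : ℚ))
    (hDα : (∀ x ∈ Ξ, D x = ρα x) ∨ (∀ x ∈ Ξ, D x = αv x - ρα x))
    (hDβ : (∀ x ∈ Ξ, D x = ρβ x) ∨ (∀ x ∈ Ξ, D x = βv x - ρβ x))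
    (hDa : D α = 1) (hDb : D β = 1) :
    ∃ (F : Set V) (m : ℚ), IsFacet Q F ∧ IsNormalData Ξ Q ω F D m :=
  statement2_general Λ Ξ hΞΛ hΛfg Q hQpoly ω hω hQΞ hQfull α β hα hβ αv βv hαvα hβvβ hαvβ hβvα Fα ρα
    mα hFα hρα hραα hstarα Fβ ρβ mβ hFβ hρβ hρββ hstarβ D hDint hDα hDβ hDa hDb
end

section
/- Let 𝒱 ⊆ N be a polyhedral convex cone (generated as a cone by finitely many vectors) which is full-dimensional in N. Then every orbit face of Q for 𝒱 contains a vertex v of Q such that {v} is itself an orbit face for 𝒱 (an orbit vertex). -/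
/-- The (algebraic) relative interior of a convex set `C`:  `x ∈ C` such that every
segment in `C` ending at `x` can be prolonged a bit beyond `x` inside `C`. -/
def algRelInt {W : Type*} [AddCommGroup W] [Module ℝ W] (C : Set W) : Set W :=
  {x ∈ C | ∀ y ∈ C, ∃ t : ℝ, 1 < t ∧ y + t • (x - y) ∈ C}

/-- `F` is a (nonempty, exposed) face of `Q`: the set of points of `Q` where some
linear functional attains its minimum over `Q`. -/
def IsFace {W : Type*} [AddCommGroup W] [Module ℝ W] (Q F : Set W) : Prop :=
  F.Nonempty ∧
    ∃ (f : W →ₗ[ℝ] ℝ) (c : ℝ), (∀ q ∈ Q, c ≤ f q) ∧ F = {q ∈ Q | f q = c}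

variable {V : Type*} [AddCommGroup V] [Module ℝ V]

/-- The normal cone `𝒞(F) ⊆ N = V*` of a face `F` of `Q`: the functionals `η` with
`η(q - p) ≥ 0` for all `q ∈ Q`, where `p` is any point of the relative interior
of `F`. -/
def normalCone (Q F : Set V) : Set (Module.Dual ℝ V) :=
  {η | ∀ p ∈ algRelInt F, ∀ q ∈ Q, 0 ≤ η (q - p)}

/-!
A functional `η` in the relative interior of `𝒞(F)` attains its minimum over `Q` only on `F`, so
the vertices of `Q` minimizing `η` lie in `F`. A full-dimensional cone `𝒱` contains a functional
`ζ` separating these finitely many vertices; if `v` is the one where `ζ` is smallest, then for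
small `t > 0` the functional `η + t ζ ∈ 𝒱` is minimized on `Q` at `v` alone, so `{v}` is a face
and `η + t ζ` lies in the relative interior of `𝒞({v})`.
-/

open Filter Topology

lemma PointedCone.coe_hull_finset {E : Type*} [AddCommGroup E] [Module ℝ E] (s : Finset E) :
    (PointedCone.hull ℝ (s : Set E) : Set E) =
      {x | ∃ c : E → ℝ, (∀ i, 0 ≤ c i) ∧ x = ∑ i ∈ s, c i • i} := by
  classical
  ext x
  simp only [SetLike.mem_coe, Submodule.mem_span_finset, Set.mem_ofPred_eq]
  constructor
  · rintro ⟨c, -, rfl⟩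
    exact ⟨fun i => c i, fun i => (c i).2, rfl⟩
  · rintro ⟨c, hc, rfl⟩
    refine ⟨fun i => if i ∈ s then ⟨c i, hc i⟩ else 0, fun i hi => ?_, ?_⟩
    · by_contra h
      exact hi (if_neg h)
    · refine Finset.sum_congr rfl fun i hi => ?_
      simp only [hi, if_true]
      rfl

lemma PointedCone.exists_mem_forall_apply_ne_zero (K : PointedCone ℝ (Module.Dual ℝ V))
    (hK : Submodule.span ℝ (K : Set (Module.Dual ℝ V)) = ⊤) (D : Finset V) :
    ∃ ζ ∈ K, ∀ d ∈ D, d ≠ 0 → ζ d ≠ 0 := by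
  classical
  induction D using Finset.induction with
  | empty => exact ⟨0, K.zero_mem, by simp⟩
  | @insert d D _ ih =>
    obtain ⟨ζ, hζK, hζ⟩ := ih
    by_cases hd : d = 0
    · refine ⟨ζ, hζK, fun d' hd' hne => hζ d' ?_ hne⟩
      exact (Finset.mem_insert.1 hd').resolve_left (by rintro rfl; exact hne hd)
    obtain ⟨ψ, hψK, hψd⟩ : ∃ ψ ∈ K, ψ d ≠ 0 := by
      by_contra! hvanish
      have hle : Submodule.span ℝ (K : Set (Module.Dual ℝ V)) ≤
          LinearMap.ker (Module.Dual.eval ℝ V d) :=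
        Submodule.span_le.2 fun φ hφ => hvanish φ hφ
      rw [hK, top_le_iff] at hle
      exact hd ((Module.forall_dual_apply_eq_zero_iff ℝ d).1 fun φ =>
        LinearMap.mem_ker.1 (hle ▸ Submodule.mem_top : φ ∈ LinearMap.ker _))
    -- a coefficient `c` avoiding the finitely many values at which `ζ + c • ψ` vanishes somewhere
    obtain ⟨c, hc, hcbad⟩ := (Set.Ioi_infinite (0 : ℝ)).exists_notMem_finset
      ((insert d D).image fun d' => -ζ d' / ψ d')
    refine ⟨ζ + c • ψ, K.add_mem hζK (K.smul_mem (le_of_lt hc) hψK), fun d' hd' hne => ?_⟩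
    simp only [LinearMap.add_apply, LinearMap.smul_apply, smul_eq_mul]
    by_cases hψd' : ψ d' = 0
    · have hd'D : d' ∈ D :=
        (Finset.mem_insert.1 hd').resolve_left (by rintro rfl; exact hψd hψd')
      simpa [hψd'] using hζ d' hd'D hne
    · intro hzero
      refine hcbad (Finset.mem_image.2 ⟨d', hd', ?_⟩)
      field_simp
      linarith

lemma PointedCone.exists_mem_injOn (K : PointedCone ℝ (Module.Dual ℝ V))
    (hK : Submodule.span ℝ (K : Set (Module.Dual ℝ V)) = ⊤) (A : Finset V) :
    ∃ ζ ∈ K, Set.InjOn ζ A := by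
  classical
  obtain ⟨ζ, hζK, hζ⟩ := K.exists_mem_forall_apply_ne_zero hK
    ((A ×ˢ A).image fun x => x.1 - x.2)
  refine ⟨ζ, hζK, fun x hx y hy hxy => ?_⟩
  by_contra hne
  refine hζ (x - y) (Finset.mem_image.2 ⟨(x, y), Finset.mem_product.2 ⟨hx, hy⟩, rfl⟩)
    (sub_ne_zero.2 hne) ?_
  rw [map_sub, hxy, sub_self]

lemma exists_pos_forall_add_mul_lt {ι : Type*} (s : Finset ι) (a b : ι → ℝ) (i₀ : ι)
    (ha : ∀ i ∈ s, a i₀ ≤ a i) (hb : ∀ i ∈ s, i ≠ i₀ → a i = a i₀ → b i₀ < b i) :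
    ∃ t > 0, ∀ i ∈ s, i ≠ i₀ → a i₀ + t * b i₀ < a i + t * b i := by
  have hev : ∀ᶠ t in 𝓝[>] (0 : ℝ), ∀ i ∈ s, i ≠ i₀ → a i₀ + t * b i₀ < a i + t * b i := by
    rw [eventually_all_finset]
    intro i hi
    rcases (ha i hi).eq_or_lt with heq | hlt
    · filter_upwards [self_mem_nhdsWithin] with t (ht : 0 < t) hne
      have := hb i hi hne heq.symm
      rw [heq]
      nlinarith
    · have : ∀ᶠ t in 𝓝 (0 : ℝ), a i₀ + t * b i₀ < a i + t * b i :=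
        ContinuousAt.eventually_lt (by fun_prop) (by fun_prop) (by simpa using hlt)
      exact (eventually_nhdsWithin_of_eventually_nhds this).mono fun t ht _ => ht
  obtain ⟨t, ht, ht0⟩ := (hev.and self_mem_nhdsWithin).exists
  exact ⟨t, ht0, ht⟩

lemma le_of_forall_le_of_mem_convexHull {s : Set V} {g : V →ₗ[ℝ] ℝ} {c : ℝ}
    (h : ∀ x ∈ s, c ≤ g x) {q : V} (hq : q ∈ convexHull ℝ s) : c ≤ g q :=
  convexHull_min h (convex_halfSpace_ge g.isLinear c) hq

lemma convexHull_filter_eq {s : Finset V} {g : V →ₗ[ℝ] ℝ} {c : ℝ} [DecidablePred (g · = c)]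
    (hs : ∀ x ∈ s, c ≤ g x) :
    convexHull ℝ (s.filter (g · = c) : Set V) = {q ∈ convexHull ℝ (s : Set V) | g q = c} := by
  refine subset_antisymm (convexHull_min (fun x hx => ?_)
    ((convex_convexHull ℝ _).inter (convex_hyperplane g.isLinear c))) fun x ⟨hx, hgx⟩ => ?_
  · obtain ⟨hxs, hgx⟩ := Finset.mem_filter.1 hx
    exact ⟨subset_convexHull ℝ _ hxs, hgx⟩
  obtain ⟨w, hw0, hw1, rfl⟩ := Finset.mem_convexHull'.1 hx
  -- `g` has average `c` under the weights `w`, and is `≥ c` on `s`, so `w` lives where `g = c`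
  have hsum : ∑ y ∈ s, w y * (g y - c) = 0 := by
    simp only [map_sum, map_smul, smul_eq_mul] at hgx
    simp only [mul_sub, Finset.sum_sub_distrib, ← Finset.sum_mul, hw1, hgx]
    ring
  have hsupp : ∀ y ∈ s, w y ≠ 0 → g y = c := fun y hy hwy => by
    have := (Finset.sum_eq_zero_iff_of_nonneg fun z hz =>
      mul_nonneg (hw0 z hz) (sub_nonneg.2 (hs z hz))).1 hsum y hy
    linarith [(mul_eq_zero.1 this).resolve_left hwy]
  refine Finset.mem_convexHull'.2 ⟨w, fun y hy => hw0 y (Finset.mem_filter.1 hy).1, ?_, ?_⟩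
  · rwa [Finset.sum_filter_of_ne hsupp]
  · exact Finset.sum_filter_of_ne fun y hy hne => hsupp y hy fun h => hne (by rw [h, zero_smul])

lemma algRelInt_convexHull_nonempty {s : Finset V} (hs : s.Nonempty) :
    (algRelInt (convexHull ℝ (s : Set V))).Nonempty := by
  set n : ℝ := (s.card : ℝ)
  have hn : 0 < n := by simpa [n] using hs
  have hsum : ∑ _y ∈ s, n⁻¹ = 1 := by simp [n, hn.ne']
  have hp : ∑ y ∈ s, n⁻¹ • y ∈ convexHull ℝ (s : Set V) :=
    Finset.mem_convexHull'.2 ⟨fun _ => n⁻¹, fun _ _ => by positivity, hsum, rfl⟩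
  refine ⟨_, hp, fun y hy => ?_⟩
  obtain ⟨u, hu0, hu1, rfl⟩ := Finset.mem_convexHull'.1 hy
  -- prolonging from `y` beyond the barycenter by `1/n` keeps every weight `≥ 1/n²`
  refine ⟨1 + n⁻¹, by simpa using hn, Finset.mem_convexHull'.2
    ⟨fun i => (1 + n⁻¹) * n⁻¹ - n⁻¹ * u i, fun i hi => ?_, ?_, ?_⟩⟩
  · have hui : u i ≤ 1 := hu1 ▸ Finset.single_le_sum hu0 hi
    have : n⁻¹ * u i ≤ n⁻¹ := mul_le_of_le_one_right (by positivity) hui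
    nlinarith [inv_pos.2 hn]
  · rw [Finset.sum_sub_distrib, ← Finset.mul_sum, ← Finset.mul_sum, hu1, hsum]
    ring
  · simp only [sub_smul, mul_smul, Finset.sum_sub_distrib, ← Finset.smul_sum, smul_sub,
      add_smul, one_smul, Finset.sum_add_distrib]
    abel

lemma IsFace.algRelInt_nonempty {s : Finset V} {F : Set V}
    (hF : IsFace (convexHull ℝ (s : Set V)) F) : (algRelInt F).Nonempty := by
  classical
  obtain ⟨hFne, f, c, hf, rfl⟩ := hF
  rw [← convexHull_filter_eq fun x hx => hf x (subset_convexHull ℝ _ hx)] at hFne ⊢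
  exact algRelInt_convexHull_nonempty (convexHull_nonempty_iff.1 hFne)

lemma IsFace.subset {Q F : Set V} (hF : IsFace Q F) : F ⊆ Q := by
  obtain ⟨-, f, c, -, rfl⟩ := hF
  exact Set.sep_subset Q _

lemma algRelInt_singleton (v : V) : algRelInt ({v} : Set V) = {v} := by
  refine subset_antisymm (fun x hx => hx.1) ?_
  rintro x rfl
  exact ⟨rfl, fun y hy => ⟨2, one_lt_two, by rw [hy, sub_self, smul_zero, add_zero]; rfl⟩⟩

lemma mem_normalCone_convexHull_singleton_iff {s : Set V} {v : V} {η : Module.Dual ℝ V} :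
    η ∈ normalCone (convexHull ℝ s) {v} ↔ ∀ q ∈ s, η v ≤ η q := by
  simp only [normalCone, algRelInt_singleton, Set.mem_singleton_iff, forall_eq, map_sub,
    sub_nonneg, Set.mem_ofPred_eq]
  exact ⟨fun h q hq => h q (subset_convexHull ℝ s hq), fun h q =>
    le_of_forall_le_of_mem_convexHull h⟩

lemma IsFace.mem_of_forall_le {s : Finset V} {F : Set V}
    (hF : IsFace (convexHull ℝ (s : Set V)) F) {η : Module.Dual ℝ V}
    (hη : η ∈ algRelInt (normalCone (convexHull ℝ (s : Set V)) F)) {q : V}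
    (hq : q ∈ convexHull ℝ (s : Set V)) (hmin : ∀ x ∈ s, η q ≤ η x) : q ∈ F := by
  obtain ⟨p, hp⟩ := hF.algRelInt_nonempty
  obtain ⟨-, f, c, hf, rfl⟩ := hF
  have hfp : f p = c := hp.1.2
  have hfN : f ∈ normalCone (convexHull ℝ (s : Set V)) {x ∈ convexHull ℝ s | f x = c} :=
    fun p' hp' q' hq' => by rw [map_sub, hp'.1.2, sub_nonneg]; exact hf q' hq'
  -- prolonging the segment from `f` beyond `η` stays in `𝒞(F)`; test it on `q - p`
  obtain ⟨t, ht, htN⟩ := hη.2 f hfN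
  have hpq := htN p hp q hq
  have hηpq : η q ≤ η p := le_of_forall_le_of_mem_convexHull hmin hp.1.1
  have hfq := hf q hq
  simp only [LinearMap.add_apply, LinearMap.smul_apply, LinearMap.sub_apply, map_sub,
    smul_eq_mul, hfp] at hpq
  exact ⟨hq, by nlinarith⟩

section StrictMinimum

variable {s : Finset V} {v : V} {η : Module.Dual ℝ V}

lemma isFace_singleton_of_forall_lt (hv : v ∈ s) (hlt : ∀ q ∈ s, q ≠ v → η v < η q) :
    IsFace (convexHull ℝ (s : Set V)) {v} := by
  classical
  have hle : ∀ q ∈ s, η v ≤ η q := fun q hq =>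
    (eq_or_ne q v).elim (fun h => h ▸ le_rfl) fun h => (hlt q hq h).le
  have hfilter : s.filter (η · = η v) = {v} := by
    ext q
    simp only [Finset.mem_filter, Finset.mem_singleton]
    exact ⟨fun ⟨hq, hηq⟩ => by_contra fun h => (hlt q hq h).ne' hηq, fun h => ⟨h ▸ hv, h ▸ rfl⟩⟩
  refine ⟨Set.singleton_nonempty v, η, η v, fun _ => le_of_forall_le_of_mem_convexHull hle, ?_⟩
  rw [← convexHull_filter_eq hle, hfilter, Finset.coe_singleton, convexHull_singleton]

lemma mem_algRelInt_normalCone_singleton_of_forall_lt (hlt : ∀ q ∈ s, q ≠ v → η v < η q) :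
    η ∈ algRelInt (normalCone (convexHull ℝ (s : Set V)) {v}) := by
  have hle : ∀ q ∈ s, η v ≤ η q := fun q hq =>
    (eq_or_ne q v).elim (fun h => h ▸ le_rfl) fun h => (hlt q hq h).le
  refine ⟨mem_normalCone_convexHull_singleton_iff.2 hle, fun y _ => ?_⟩
  -- `y + (1 + u) • (η - y) = η + u • (η - y)` still has its strict minimum at `v` for small `u`
  obtain ⟨u, hu, hmin⟩ := exists_pos_forall_add_mul_lt s η (η - y) v hle
    fun q hq hqv heq => absurd heq (hlt q hq hqv).ne'
  refine ⟨1 + u, by linarith, mem_normalCone_convexHull_singleton_iff.2 fun q hq => ?_⟩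
  rcases eq_or_ne q v with rfl | hqv
  · rfl
  have := hmin q hq hqv
  simp only [LinearMap.add_apply, LinearMap.smul_apply, LinearMap.sub_apply, Pi.sub_apply,
    smul_eq_mul] at this ⊢
  linarith

end StrictMinimum

theorem statement7_general
    (Q : Set V) (hQpoly : ∃ s : Finset V, Q = convexHull ℝ (s : Set V))
    (𝒱 : Set (Module.Dual ℝ V))
    -- `𝒱` is a polyhedral convex cone (generated by finitely many vectors)
    (h𝒱poly : ∃ s : Finset (Module.Dual ℝ V),
      𝒱 = {x | ∃ c : Module.Dual ℝ V → ℝ, (∀ i, 0 ≤ c i) ∧ x = ∑ i ∈ s, c i • i})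
    -- `𝒱` is full-dimensional in `N`
    (h𝒱full : Submodule.span ℝ 𝒱 = ⊤) :
    ∀ F : Set V, IsFace Q F → (algRelInt (normalCone Q F) ∩ 𝒱).Nonempty →
      ∃ v ∈ F, IsFace Q {v} ∧ (algRelInt (normalCone Q {v}) ∩ 𝒱).Nonempty := by
  classical
  obtain ⟨s, rfl⟩ := hQpoly
  obtain ⟨g, rfl⟩ := h𝒱poly
  rw [← PointedCone.coe_hull_finset g] at h𝒱full ⊢
  set K := PointedCone.hull ℝ (g : Set (Module.Dual ℝ V))
  rintro F hF ⟨η, hηF, hηK⟩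
  obtain ⟨x₀, hx₀, hx₀min⟩ :=
    s.exists_min_image η (Finset.coe_nonempty.1 (convexHull_nonempty_iff.1 (hF.1.mono hF.subset)))
  set A := s.filter (η · = η x₀)
  -- break the ties on `A` with a generic `ζ ∈ 𝒱`, then tilt `η` slightly towards `ζ`
  obtain ⟨ζ, hζK, hζinj⟩ := K.exists_mem_injOn h𝒱full A
  obtain ⟨v, hvA, hvmin⟩ := A.exists_min_image ζ ⟨x₀, Finset.mem_filter.2 ⟨hx₀, rfl⟩⟩
  obtain ⟨hv, hηv⟩ := Finset.mem_filter.1 hvA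
  have hζlt : ∀ q ∈ A, q ≠ v → ζ v < ζ q := fun q hq hqv =>
    (hvmin q hq).lt_of_ne fun h => hqv (hζinj hq hvA h.symm)
  obtain ⟨t, ht, hlt⟩ := exists_pos_forall_add_mul_lt s η ζ v (fun q hq => hηv ▸ hx₀min q hq)
    fun q hq hqv hηq => hζlt q (Finset.mem_filter.2 ⟨hq, hηq.trans hηv⟩) hqv
  have hlt' : ∀ q ∈ s, q ≠ v → (η + t • ζ) v < (η + t • ζ) q := by simpa using hlt
  refine ⟨v, hF.mem_of_forall_le hηF (subset_convexHull ℝ _ hv) (hηv ▸ hx₀min),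
    isFace_singleton_of_forall_lt hv hlt', η + t • ζ,
    mem_algRelInt_normalCone_singleton_of_forall_lt hlt', K.add_mem hηK (K.smul_mem ht.le hζK)⟩

theorem statement7 [FiniteDimensional ℝ V]
    (Q : Set V) (hQpoly : ∃ s : Finset V, Q = convexHull ℝ (s : Set V))
    (hQfull : affineSpan ℝ Q = ⊤)
    (𝒱 : Set (Module.Dual ℝ V))
    -- `𝒱` is a polyhedral convex cone (generated by finitely many vectors)
    (h𝒱poly : ∃ s : Finset (Module.Dual ℝ V),
      𝒱 = {x | ∃ c : Module.Dual ℝ V → ℝ, (∀ i, 0 ≤ c i) ∧ x = ∑ i ∈ s, c i • i})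
    -- `𝒱` is full-dimensional in `N`
    (h𝒱full : Submodule.span ℝ 𝒱 = ⊤) :
    ∀ F : Set V, IsFace Q F → (algRelInt (normalCone Q F) ∩ 𝒱).Nonempty →
      ∃ v ∈ F, IsFace Q {v} ∧ (algRelInt (normalCone Q {v}) ∩ 𝒱).Nonempty :=
  statement7_general Q hQpoly 𝒱 h𝒱poly h𝒱full
end
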